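/- Let (p_m), (q_n) be positive sequences with partial sums P_m, Q_n strictly increasing to infinity, satisfying P_{m−1}/P_m → 1 and Q_{n−1}/Q_n → 1. Let (u_{mn}) be a double sequence of real numbers whose weighted means σ_{mn} are P-convergent to ℓ. If there exists M > 0 such that for all sufficiently large m, n: (P_m/p_m)(u_{mn} − u_{m−1,n}) ≥ −M and (Q_n/q_n)(u_{mn} − u_{m,n−1}) ≥ −M, then (u_{mn}) is P-convergent to ℓ. -/

import Mathlib

/-!
The one-sided conditions make `u` almost increasing along rows and columns: for `K ≤ x ≤ i` and
`K ≤ y ≤ j`, `u x y ≤ u i j + M (P i / P x - 1) + M (Q j / Q y - 1)`. Averaging this with the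
weights `p i * q j` over a rectangle `(x, X] × (y, Y]` compares `u` at a corner with the weighted
mean over the rectangle, and that mean is an inclusion–exclusion of four `σ`'s, hence close to `ℓ`
as long as `P X / P x` and `Q Y / Q y` stay away from `1`. Because `P (m - 1) / P m → 1`, from
every large `m` one can step up or down to an index at ratio between `1 + θ` and `(1 + θ) ^ 2`.
The rectangle with lower corner `(m, n)` bounds `u m n` from above, the one with upper corner
`(m, n)` from below, with error `O(M θ) + O(ε / θ ^ 2)`.
-/

open Filter Finset Topology

lemma sum_Ioc_eq_sum_range_sub {M : Type*} [AddCommGroup M] (f : ℕ → M) {a b : ℕ} (h : a ≤ b) :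
    ∑ i ∈ Ioc a b, f i = ∑ i ∈ range (b + 1), f i - ∑ i ∈ range (a + 1), f i := by
  rw [← Ico_add_one_add_one_eq_Ioc, sum_Ico_eq_sub _ (by omega)]

lemma sum_Ioc_sum_Ioc_eq {M : Type*} [AddCommGroup M] (f : ℕ → ℕ → M) {x X y Y : ℕ}
    (hx : x ≤ X) (hy : y ≤ Y) :
    ∑ i ∈ Ioc x X, ∑ j ∈ Ioc y Y, f i j =
      ∑ i ∈ range (X + 1), ∑ j ∈ range (Y + 1), f i j
        - ∑ i ∈ range (x + 1), ∑ j ∈ range (Y + 1), f i j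
        - ∑ i ∈ range (X + 1), ∑ j ∈ range (y + 1), f i j
        + ∑ i ∈ range (x + 1), ∑ j ∈ range (y + 1), f i j := by
  simp_rw [sum_Ioc_eq_sum_range_sub _ hy, sum_sub_distrib, sum_Ioc_eq_sum_range_sub _ hx]
  abel

section PartialSums

variable {p P : ℕ → ℝ}

lemma partialSum_pos (hp : ∀ m, 0 < p m) (hP : ∀ m, P m = ∑ i ∈ range (m + 1), p i) (m : ℕ) :
    0 < P m :=
  hP m ▸ sum_pos (fun i _ => hp i) nonempty_range_add_one

lemma partialSum_succ (hP : ∀ m, P m = ∑ i ∈ range (m + 1), p i) (m : ℕ) :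
    P (m + 1) = P m + p (m + 1) := by
  rw [hP, hP, sum_range_succ _ (m + 1)]

lemma partialSum_strictMono (hp : ∀ m, 0 < p m) (hP : ∀ m, P m = ∑ i ∈ range (m + 1), p i) :
    StrictMono P :=
  strictMono_nat_of_lt_succ fun m => by linarith [partialSum_succ hP m, hp (m + 1)]

lemma sum_Ioc_eq_partialSum_sub (hP : ∀ m, P m = ∑ i ∈ range (m + 1), p i) {x X : ℕ}
    (h : x ≤ X) : ∑ i ∈ Ioc x X, p i = P X - P x := by
  rw [sum_Ioc_eq_sum_range_sub _ h, hP, hP]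

lemma le_add_of_landau (hp : ∀ m, 0 < p m) (hP : ∀ m, P m = ∑ i ∈ range (m + 1), p i)
    {v : ℕ → ℝ} {K : ℕ} {M : ℝ} (hM : 0 ≤ M)
    (hv : ∀ k, K < k → -M ≤ P k / p k * (v k - v (k - 1))) {i m : ℕ} (hi : K ≤ i) (him : i ≤ m) :
    v i ≤ v m + M * (P m / P i - 1) := by
  have hPi := partialSum_pos hp hP i
  induction m, him using Nat.le_induction with
  | base => simp [hPi.ne']
  | succ m him ih =>
    have hPm := partialSum_pos hp hP (m + 1)
    have hpm := hp (m + 1)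
    have hstep : -(M * (p (m + 1) / P (m + 1))) ≤ v (m + 1) - v m := by
      have h := hv (m + 1) (by omega)
      rw [Nat.add_sub_cancel] at h
      field_simp at h ⊢
      linarith
    have hdiv : M * (p (m + 1) / P (m + 1)) ≤ M * (p (m + 1) / P i) :=
      mul_le_mul_of_nonneg_left (div_le_div_of_nonneg_left hpm.le hPi
        ((partialSum_strictMono hp hP).monotone (by omega))) hM
    rw [partialSum_succ hP, add_div]
    linarith

end PartialSums

section RatioTendstoOne

variable {P : ℕ → ℝ}

lemma eventually_exists_le_le_one_add_mul (hmono : Monotone P) (htop : Tendsto P atTop atTop)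
    (hratio : Tendsto (fun m => P (m - 1) / P m) atTop (𝓝 1)) {δ : ℝ} (hδ : 0 < δ) (N : ℕ) :
    ∀ᶠ T in atTop, ∃ k, N ≤ k ∧ T ≤ P k ∧ P k ≤ (1 + δ) * T := by
  obtain ⟨N', hN'⟩ := eventually_atTop.1 <| hratio.eventually <| eventually_gt_nhds <|
    (div_lt_one (by linarith : (0 : ℝ) < 1 + δ)).2 (by linarith : (1 : ℝ) < 1 + δ)
  filter_upwards [eventually_gt_atTop (max (P (max N N')) 0)] with T hT
  rw [max_lt_iff] at hT
  have hex : ∃ k, T ≤ P k := (htop.eventually_ge_atTop T).exists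
  set k := Nat.find hex
  have hk : T ≤ P k := Nat.find_spec hex
  have hNk : max N N' < k := by
    by_contra! h
    linarith [hmono h]
  have hprev : P (k - 1) < T := not_le.1 (Nat.find_min hex (by omega))
  have hrat := hN' k (by omega)
  rw [lt_div_iff₀ (by linarith), one_div_mul_eq_div, div_lt_iff₀ (by linarith)] at hrat
  exact ⟨k, by omega, hk, by nlinarith⟩

def IsStretch (P : ℕ → ℝ) (θ : ℝ) (x X : ℕ) : Prop :=
  (1 + θ) * P x ≤ P X ∧ P X ≤ (1 + θ) ^ 2 * P x

variable {θ : ℝ}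

lemma eventually_exists_isStretch_right (hmono : Monotone P) (htop : Tendsto P atTop atTop)
    (hratio : Tendsto (fun m => P (m - 1) / P m) atTop (𝓝 1)) (hθ : 0 < θ) :
    ∀ᶠ m in atTop, ∃ X, IsStretch P θ m X := by
  filter_upwards [(htop.const_mul_atTop (by linarith : 0 < 1 + θ)).eventually
    (eventually_exists_le_le_one_add_mul hmono htop hratio hθ 0)] with m ⟨X, _, hlow, hup⟩
  exact ⟨X, hlow, by rwa [sq, mul_assoc]⟩

lemma eventually_exists_isStretch_left (hmono : Monotone P) (htop : Tendsto P atTop atTop)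
    (hratio : Tendsto (fun m => P (m - 1) / P m) atTop (𝓝 1)) (hθ : 0 < θ) (N : ℕ) :
    ∀ᶠ m in atTop, ∃ x, N ≤ x ∧ IsStretch P θ x m := by
  have hθ' : (0 : ℝ) < (1 + θ) ^ 2 := by positivity
  filter_upwards [(htop.atTop_div_const hθ').eventually
    (eventually_exists_le_le_one_add_mul hmono htop hratio hθ N)] with m ⟨x, hx, hlow, hup⟩
  refine ⟨x, hx, ?_, (div_le_iff₀' hθ').1 hlow⟩
  rw [mul_div_assoc', le_div_iff₀ hθ', sq, ← mul_assoc] at hup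
  exact le_of_mul_le_mul_right (by linarith) (by linarith : 0 < 1 + θ)

end RatioTendstoOne

lemma div_sub_one_le_three_mul {a b θ : ℝ} (ha : 0 < a) (hθ : 0 ≤ θ) (hθ1 : θ ≤ 1)
    (h : b ≤ (1 + θ) ^ 2 * a) : b / a - 1 ≤ 3 * θ := by
  rw [sub_le_iff_le_add, div_le_iff₀ ha]
  nlinarith [mul_nonneg (mul_nonneg hθ (sub_nonneg.2 hθ1)) ha.le]

lemma div_sub_le_four_div {a b θ : ℝ} (ha : 0 < a) (hθ : 0 < θ) (hθ1 : θ ≤ 1)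
    (hlow : (1 + θ) * a ≤ b) (hup : b ≤ (1 + θ) ^ 2 * a) : b / (b - a) ≤ 4 / θ := by
  have hb : b ≤ 4 * a := hup.trans (mul_le_mul_of_nonneg_right (by nlinarith) ha.le)
  rw [div_le_div_iff₀ (by nlinarith) hθ]
  nlinarith [mul_le_mul_of_nonneg_right hb hθ.le]

lemma mul_sum_mul_sum_le_sum_sum {α β : Type*} {s : Finset α} {t : Finset β} {p : α → ℝ}
    {q : β → ℝ} {f : α → β → ℝ} {a : ℝ} (hp : ∀ i ∈ s, 0 ≤ p i) (hq : ∀ j ∈ t, 0 ≤ q j)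
    (h : ∀ i ∈ s, ∀ j ∈ t, a ≤ f i j) :
    a * ((∑ i ∈ s, p i) * ∑ j ∈ t, q j) ≤ ∑ i ∈ s, ∑ j ∈ t, p i * q j * f i j := by
  rw [sum_mul_sum, mul_sum]
  refine sum_le_sum fun i hi => ?_
  rw [mul_sum]
  refine sum_le_sum fun j hj => ?_
  rw [mul_comm]
  exact mul_le_mul_of_nonneg_left (h i hi j hj) (mul_nonneg (hp i hi) (hq j hj))

lemma sum_sum_le_mul_sum_mul_sum {α β : Type*} {s : Finset α} {t : Finset β} {p : α → ℝ}
    {q : β → ℝ} {f : α → β → ℝ} {b : ℝ} (hp : ∀ i ∈ s, 0 ≤ p i) (hq : ∀ j ∈ t, 0 ≤ q j)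
    (h : ∀ i ∈ s, ∀ j ∈ t, f i j ≤ b) :
    ∑ i ∈ s, ∑ j ∈ t, p i * q j * f i j ≤ b * ((∑ i ∈ s, p i) * ∑ j ∈ t, q j) := by
  have := mul_sum_mul_sum_le_sum_sum (f := fun i j => -f i j) (a := -b) hp hq
    (fun i hi j hj => neg_le_neg (h i hi j hj))
  simp only [mul_neg, neg_mul, sum_neg_distrib, neg_le_neg_iff] at this
  exact this

section DoubleSequence

variable {u : ℕ → ℕ → ℝ} {p q P Q : ℕ → ℝ} {M : ℝ} {K : ℕ}

lemma le_add_of_landau₂ (hp : ∀ m, 0 < p m) (hq : ∀ n, 0 < q n)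
    (hP : ∀ m, P m = ∑ i ∈ range (m + 1), p i) (hQ : ∀ n, Q n = ∑ j ∈ range (n + 1), q j)
    (hM : 0 ≤ M) (hL : ∀ m n, K ≤ m → K ≤ n →
      P m / p m * (u m n - u (m - 1) n) ≥ -M ∧ Q n / q n * (u m n - u m (n - 1)) ≥ -M)
    {x y i j : ℕ} (hx : K ≤ x) (hy : K ≤ y) (hxi : x ≤ i) (hyj : y ≤ j) :
    u x y ≤ u i j + (M * (P i / P x - 1) + M * (Q j / Q y - 1)) := by
  have hrow := le_add_of_landau hp hP (v := fun k => u k y) hM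
    (fun k hk => (hL k y hk.le hy).1) hx hxi
  have hcol := le_add_of_landau hq hQ (v := fun k => u i k) hM
    (fun k hk => (hL i k (hx.trans hxi) hk.le).2) hy hyj
  linarith

lemma abs_sum_Ioc_Ioc_sub_le (hp : ∀ m, 0 < p m) (hq : ∀ n, 0 < q n)
    (hP : ∀ m, P m = ∑ i ∈ range (m + 1), p i) (hQ : ∀ n, Q n = ∑ j ∈ range (n + 1), q j)
    {σ : ℕ → ℕ → ℝ} (hσ : ∀ m n, σ m n =
      (∑ i ∈ range (m + 1), ∑ j ∈ range (n + 1), p i * q j * u i j) / (P m * Q n))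
    {ℓ ε : ℝ} {N : ℕ} (hσℓ : ∀ m n, N ≤ m → N ≤ n → |σ m n - ℓ| ≤ ε)
    {x X y Y : ℕ} (hx : N ≤ x) (hy : N ≤ y) (hxX : x ≤ X) (hyY : y ≤ Y) :
    |∑ i ∈ Ioc x X, ∑ j ∈ Ioc y Y, p i * q j * u i j - ℓ * ((P X - P x) * (Q Y - Q y))|
      ≤ 4 * ε * (P X * Q Y) := by
  have hPpos := partialSum_pos hp hP
  have hQpos := partialSum_pos hq hQ
  have hsum : ∀ m n, ∑ i ∈ range (m + 1), ∑ j ∈ range (n + 1), p i * q j * u i j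
      = σ m n * (P m * Q n) := fun m n => by
    rw [hσ, div_mul_cancel₀ _ (mul_pos (hPpos m) (hQpos n)).ne']
  have hterm : ∀ a b, N ≤ a → a ≤ X → N ≤ b → b ≤ Y →
      |(σ a b - ℓ) * (P a * Q b)| ≤ ε * (P X * Q Y) := fun a b ha haX hb hbY => by
    rw [abs_mul, abs_of_pos (mul_pos (hPpos a) (hQpos b))]
    exact mul_le_mul (hσℓ a b ha hb)
      (mul_le_mul ((partialSum_strictMono hp hP).monotone haX)
        ((partialSum_strictMono hq hQ).monotone hbY) (hQpos b).le (hPpos X).le)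
      (mul_pos (hPpos a) (hQpos b)).le ((abs_nonneg _).trans (hσℓ a b ha hb))
  have hXY := abs_le.1 (hterm X Y (hx.trans hxX) le_rfl (hy.trans hyY) le_rfl)
  have hxY := abs_le.1 (hterm x Y hx hxX (hy.trans hyY) le_rfl)
  have hXy := abs_le.1 (hterm X y (hx.trans hxX) le_rfl hy hyY)
  have hxy := abs_le.1 (hterm x y hx hxX hy hyY)
  rw [sum_Ioc_sum_Ioc_eq _ hxX hyY, hsum, hsum, hsum, hsum, abs_le]
  constructor <;> linarith

lemma sum_Ioc_Ioc_bounds_of_landau (hp : ∀ m, 0 < p m) (hq : ∀ n, 0 < q n)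
    (hP : ∀ m, P m = ∑ i ∈ range (m + 1), p i) (hQ : ∀ n, Q n = ∑ j ∈ range (n + 1), q j)
    (hM : 0 ≤ M) (hL : ∀ m n, K ≤ m → K ≤ n →
      P m / p m * (u m n - u (m - 1) n) ≥ -M ∧ Q n / q n * (u m n - u m (n - 1)) ≥ -M)
    {x X y Y : ℕ} (hxK : K ≤ x) (hyK : K ≤ y) (hxX : x ≤ X) (hyY : y ≤ Y) :
    let c := M * (P X / P x - 1) + M * (Q Y / Q y - 1)
    let S := ∑ i ∈ Ioc x X, ∑ j ∈ Ioc y Y, p i * q j * u i j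
    (u x y - c) * ((P X - P x) * (Q Y - Q y)) ≤ S ∧
      S ≤ (u X Y + c) * ((P X - P x) * (Q Y - Q y)) := by
  intro c S
  have hPx := partialSum_pos hp hP x
  have hQy := partialSum_pos hq hQ y
  have hPmono := (partialSum_strictMono hp hP).monotone
  have hQmono := (partialSum_strictMono hq hQ).monotone
  rw [← sum_Ioc_eq_partialSum_sub hP hxX, ← sum_Ioc_eq_partialSum_sub hQ hyY]
  constructor
  · refine mul_sum_mul_sum_le_sum_sum (fun i _ => (hp i).le) (fun j _ => (hq j).le) ?_
    intro i hi j hj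
    rw [mem_Ioc] at hi hj
    have h := le_add_of_landau₂ hp hq hP hQ hM hL hxK hyK hi.1.le hj.1.le
    have hPi : M * (P i / P x - 1) ≤ M * (P X / P x - 1) := by gcongr; exact hPmono hi.2
    have hQj : M * (Q j / Q y - 1) ≤ M * (Q Y / Q y - 1) := by gcongr; exact hQmono hj.2
    linarith
  · refine sum_sum_le_mul_sum_mul_sum (fun i _ => (hp i).le) (fun j _ => (hq j).le) ?_
    intro i hi j hj
    rw [mem_Ioc] at hi hj
    have h := le_add_of_landau₂ hp hq hP hQ hM hL (hxK.trans hi.1.le) (hyK.trans hj.1.le) hi.2 hj.2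
    have hPi : M * (P X / P i - 1) ≤ M * (P X / P x - 1) := by
      gcongr
      · linarith [hPmono hxX]
      · exact hPmono hi.1.le
    have hQj : M * (Q Y / Q j - 1) ≤ M * (Q Y / Q y - 1) := by
      gcongr
      · linarith [hQmono hyY]
      · exact hQmono hj.1.le
    linarith

lemma sub_le_and_sub_le_of_isStretch (hp : ∀ m, 0 < p m) (hq : ∀ n, 0 < q n)
    (hP : ∀ m, P m = ∑ i ∈ range (m + 1), p i) (hQ : ∀ n, Q n = ∑ j ∈ range (n + 1), q j)
    (hM : 0 ≤ M) (hL : ∀ m n, K ≤ m → K ≤ n →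
      P m / p m * (u m n - u (m - 1) n) ≥ -M ∧ Q n / q n * (u m n - u m (n - 1)) ≥ -M)
    {σ : ℕ → ℕ → ℝ} (hσ : ∀ m n, σ m n =
      (∑ i ∈ range (m + 1), ∑ j ∈ range (n + 1), p i * q j * u i j) / (P m * Q n))
    {ℓ ε : ℝ} {N : ℕ} (hσℓ : ∀ m n, N ≤ m → N ≤ n → |σ m n - ℓ| ≤ ε)
    {θ : ℝ} (hθ : 0 < θ) (hθ1 : θ ≤ 1)
    {x X y Y : ℕ} (hxK : K ≤ x) (hyK : K ≤ y) (hxN : N ≤ x) (hyN : N ≤ y)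
    (hxX : IsStretch P θ x X) (hyY : IsStretch Q θ y Y) :
    u x y - ℓ ≤ 6 * M * θ + 64 * ε / θ ^ 2 ∧ ℓ - u X Y ≤ 6 * M * θ + 64 * ε / θ ^ 2 := by
  have hPx := partialSum_pos hp hP x
  have hQy := partialSum_pos hq hQ y
  have hPxX : P x < P X := by nlinarith [hxX.1]
  have hQyY : Q y < Q Y := by nlinarith [hyY.1]
  have hxltX : x < X := (partialSum_strictMono hp hP).lt_iff_lt.1 hPxX
  have hyltY : y < Y := (partialSum_strictMono hq hQ).lt_iff_lt.1 hQyY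
  obtain ⟨hlow, hup⟩ :=
    sum_Ioc_Ioc_bounds_of_landau hp hq hP hQ hM hL hxK hyK hxltX.le hyltY.le
  have hS := abs_le.1 (abs_sum_Ioc_Ioc_sub_le hp hq hP hQ hσ hσℓ hxN hyN hxltX.le hyltY.le)
  set c := M * (P X / P x - 1) + M * (Q Y / Q y - 1)
  set A := (P X - P x) * (Q Y - Q y)
  have hA : 0 < A := mul_pos (by linarith) (by linarith)
  have hc : c ≤ 6 * M * θ := by
    have h1 := mul_le_mul_of_nonneg_left (div_sub_one_le_three_mul hPx hθ.le hθ1 hxX.2) hM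
    have h2 := mul_le_mul_of_nonneg_left (div_sub_one_le_three_mul hQy hθ.le hθ1 hyY.2) hM
    linarith
  have herr : 4 * ε * (P X * Q Y) / A ≤ 64 * ε / θ ^ 2 := by
    have hε : 0 ≤ ε := (abs_nonneg _).trans (hσℓ N N le_rfl le_rfl)
    calc 4 * ε * (P X * Q Y) / A = 4 * ε * (P X / (P X - P x) * (Q Y / (Q Y - Q y))) := by
          rw [mul_div_assoc, mul_div_mul_comm]
      _ ≤ 4 * ε * (4 / θ * (4 / θ)) := by
          have hPr := div_sub_le_four_div hPx hθ hθ1 hxX.1 hxX.2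
          have hQr := div_sub_le_four_div hQy hθ hθ1 hyY.1 hyY.2
          gcongr
          exact div_nonneg (by linarith) (by linarith)
      _ = 64 * ε / θ ^ 2 := by ring
  constructor
  · have : u x y - c - ℓ ≤ 4 * ε * (P X * Q Y) / A := by
      rw [le_div_iff₀ hA]; linarith
    linarith
  · have : ℓ - u X Y - c ≤ 4 * ε * (P X * Q Y) / A := by
      rw [le_div_iff₀ hA]; linarith
    linarith

end DoubleSequence

/-- Tauberian theorem with one-sided Landau-type conditions for real double sequences. -/
theorem stmt11 (u : ℕ → ℕ → ℝ) (p q : ℕ → ℝ)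
    (hp : ∀ m, 0 < p m) (hq : ∀ n, 0 < q n)
    (P Q : ℕ → ℝ)
    (hP : ∀ m : ℕ, P m = ∑ i ∈ Finset.range (m + 1), p i)
    (hQ : ∀ n : ℕ, Q n = ∑ j ∈ Finset.range (n + 1), q j)
    (hPtop : Tendsto P atTop atTop) (hQtop : Tendsto Q atTop atTop)
    (hPratio : Tendsto (fun m : ℕ => P (m - 1) / P m) atTop (nhds 1))
    (hQratio : Tendsto (fun n : ℕ => Q (n - 1) / Q n) atTop (nhds 1))
    (σ : ℕ → ℕ → ℝ)
    (hσ : ∀ m n : ℕ, σ m n =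
      (∑ i ∈ Finset.range (m + 1), ∑ j ∈ Finset.range (n + 1), p i * q j * u i j)
        / (P m * Q n))
    (ℓ : ℝ)
    (hsum : ∀ ε > (0 : ℝ), ∃ n₀ : ℕ, ∀ m n : ℕ, n₀ ≤ m → n₀ ≤ n → |σ m n - ℓ| < ε)
    (M : ℝ) (hM : 0 < M)
    (hLandau : ∃ n₁ : ℕ, ∀ m n : ℕ, n₁ ≤ m → n₁ ≤ n →
      P m / p m * (u m n - u (m - 1) n) ≥ -M ∧
      Q n / q n * (u m n - u m (n - 1)) ≥ -M) :
    ∀ ε > (0 : ℝ), ∃ n₀ : ℕ, ∀ m n : ℕ, n₀ ≤ m → n₀ ≤ n → |u m n - ℓ| < ε := by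
  intro ε hε
  obtain ⟨K, hL⟩ := hLandau
  set θ := min 1 (ε / (12 * M))
  have hθ : 0 < θ := lt_min one_pos (by positivity)
  have hθ1 : θ ≤ 1 := min_le_left _ _
  have hMθ : 6 * M * θ ≤ ε / 2 := by
    have h := mul_le_mul_of_nonneg_left (min_le_right 1 (ε / (12 * M))) (by positivity : 0 ≤ 6 * M)
    rwa [show 6 * M * (ε / (12 * M)) = ε / 2 by field_simp; ring] at h
  obtain ⟨N, hN⟩ := hsum (ε * θ ^ 2 / 256) (by positivity)
  have hPmono := (partialSum_strictMono hp hP).monotone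
  have hQmono := (partialSum_strictMono hq hQ).monotone
  obtain ⟨NP, hNP⟩ := eventually_atTop.1 <|
    (eventually_exists_isStretch_right hPmono hPtop hPratio hθ).and
      (eventually_exists_isStretch_left hPmono hPtop hPratio hθ (max K N))
  obtain ⟨NQ, hNQ⟩ := eventually_atTop.1 <|
    (eventually_exists_isStretch_right hQmono hQtop hQratio hθ).and
      (eventually_exists_isStretch_left hQmono hQtop hQratio hθ (max K N))
  refine ⟨max (max K N) (max NP NQ), fun m n hm hn => ?_⟩
  obtain ⟨⟨X, hmX⟩, x, hx, hxm⟩ := hNP m (by omega)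
  obtain ⟨⟨Y, hnY⟩, y, hy, hyn⟩ := hNQ n (by omega)
  have hN' : ∀ m n, N ≤ m → N ≤ n → |σ m n - ℓ| ≤ ε * θ ^ 2 / 256 :=
    fun m n hm hn => (hN m n hm hn).le
  have hupper := (sub_le_and_sub_le_of_isStretch hp hq hP hQ hM.le hL hσ hN' hθ hθ1
    (by omega) (by omega) (by omega) (by omega) hmX hnY).1
  have hlower := (sub_le_and_sub_le_of_isStretch hp hq hP hQ hM.le hL hσ hN' hθ hθ1
    (by omega) (by omega) (by omega) (by omega) hxm hyn).2
  have herr : 64 * (ε * θ ^ 2 / 256) / θ ^ 2 = ε / 4 := by field_simp; ring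
  rw [abs_lt]
  constructor <;> linarith
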